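/- Fix μ ∈ ℝ, m > 0, s ∈ (0,1), N > 2s, and suppose u ∈ H^s(ℝ^N), u ≠ 0, satisfies the Pohožaev identity P(μ,u) = ‖(-Δ)^{s/2}u‖₂² + 2_s^*·∫((μ/2)u² - G(u))dx = 0 with ∫G(u)dx finite. Let t := (m/‖u‖₂²)^{1/N} and v := u(·/t), so that ‖v‖₂² = m. Then I^m(μ,u) := (1/2)‖(-Δ)^{s/2}u‖₂² + (μ/2)(‖u‖₂² - m) - ∫G(u)dx ≥ K(v) := (1/2)‖(-Δ)^{s/2}v‖₂² - ∫G(v)dx. -/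

import Mathlib

open MeasureTheory

/-- Gagliardo seminorm squared `‖(-Δ)^{s/2}u‖₂²` (up to the constant `C_{N,s}`). -/
noncomputable def gagSq (N : ℕ) (s : ℝ) (u : EuclideanSpace ℝ (Fin N) → ℝ) : ℝ :=
  ∫ p : EuclideanSpace ℝ (Fin N) × EuclideanSpace ℝ (Fin N),
    (u p.1 - u p.2) ^ 2 / ‖p.1 - p.2‖ ^ ((N : ℝ) + 2 * s)

/-- `‖u‖₂²`. -/
noncomputable def l2Sq (N : ℕ) (u : EuclideanSpace ℝ (Fin N) → ℝ) : ℝ :=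
  ∫ x, (u x) ^ 2

/-- Pohožaev functional `P(μ,u)`. -/
noncomputable def PohMu (N : ℕ) (s μ : ℝ) (G : ℝ → ℝ)
    (u : EuclideanSpace ℝ (Fin N) → ℝ) : ℝ :=
  gagSq N s u + (2 * N / ((N : ℝ) - 2 * s)) *
    ∫ x, (μ / 2 * (u x) ^ 2 - G (u x))

/-- Lagrangian `I^m(μ,u) = (1/2)‖(-Δ)^{s/2}u‖₂² + (μ/2)(‖u‖₂² - m) - ∫G(u)`. -/
noncomputable def lagI (N : ℕ) (s μ m : ℝ) (G : ℝ → ℝ)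
    (u : EuclideanSpace ℝ (Fin N) → ℝ) : ℝ :=
  1 / 2 * gagSq N s u + μ / 2 * (l2Sq N u - m) - ∫ x, G (u x)

/-- Energy `K(v) = (1/2)‖(-Δ)^{s/2}v‖₂² - ∫G(v)`. -/
noncomputable def enK (N : ℕ) (s : ℝ) (G : ℝ → ℝ)
    (u : EuclideanSpace ℝ (Fin N) → ℝ) : ℝ :=
  1 / 2 * gagSq N s u - ∫ x, G (u x)


section Aux
open Real

lemma scale_int_aux (N : ℕ) {c : ℝ} (hc : 0 ≤ c) (g : EuclideanSpace ℝ (Fin N) → ℝ) :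
    ∫ x, g (c⁻¹ • x) = c ^ N * ∫ x, g x := by
  have := Measure.integral_comp_inv_smul_of_nonneg
    (volume : Measure (EuclideanSpace ℝ (Fin N))) g hc
  simpa [finrank_euclideanSpace_fin, smul_eq_mul] using this

lemma scale_int2_aux (N : ℕ) {c : ℝ} (hc : 0 ≤ c)
    (g : EuclideanSpace ℝ (Fin N) × EuclideanSpace ℝ (Fin N) → ℝ) :
    ∫ p, g (c⁻¹ • p) = c ^ (2 * N) * ∫ p, g p := by
  haveI : (volume :
      Measure (EuclideanSpace ℝ (Fin N) × EuclideanSpace ℝ (Fin N))).IsAddHaarMeasure :=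
    Measure.prod.instIsAddHaarMeasure _ _
  have := Measure.integral_comp_inv_smul_of_nonneg
    (volume : Measure (EuclideanSpace ℝ (Fin N) × EuclideanSpace ℝ (Fin N))) g hc
  simpa [Module.finrank_prod, finrank_euclideanSpace_fin, two_mul, pow_add, smul_eq_mul]
    using this

lemma gag_scale_aux (N : ℕ) (s : ℝ) {c : ℝ} (hc : 0 < c)
    (u : EuclideanSpace ℝ (Fin N) → ℝ) :
    gagSq N s (fun x => u (c⁻¹ • x)) =
      (c : ℝ) ^ (2 * N) * ((c ^ ((N : ℝ) + 2 * s))⁻¹ * gagSq N s u) := by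
  set r : ℝ := (N : ℝ) + 2 * s with hr
  set Fc : EuclideanSpace ℝ (Fin N) × EuclideanSpace ℝ (Fin N) → ℝ :=
    fun q => (u q.1 - u q.2) ^ 2 / ‖c • q.1 - c • q.2‖ ^ r with hFc
  have h1 : gagSq N s (fun x => u (c⁻¹ • x)) = ∫ p, Fc (c⁻¹ • p) := by
    unfold gagSq
    congr 1
    funext p
    simp only [hFc, Prod.smul_fst, Prod.smul_snd, smul_inv_smul₀ hc.ne']
    rfl
  have h2 : ∀ q : EuclideanSpace ℝ (Fin N) × EuclideanSpace ℝ (Fin N),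
      Fc q = (c ^ r)⁻¹ * ((u q.1 - u q.2) ^ 2 / ‖q.1 - q.2‖ ^ r) := by
    intro q
    have hnorm : ‖c • q.1 - c • q.2‖ = c * ‖q.1 - q.2‖ := by
      rw [← smul_sub, norm_smul, Real.norm_eq_abs, abs_of_pos hc]
    rw [hFc]
    simp only
    rw [hnorm, Real.mul_rpow hc.le (norm_nonneg _), mul_comm (c ^ r), ← div_div]
    ring
  rw [h1, scale_int2_aux N hc.le]
  congr 1
  unfold gagSq
  rw [← integral_const_mul]
  exact integral_congr_ae (Filter.Eventually.of_forall fun q => h2 q)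

end Aux

set_option maxHeartbeats 1000000 in
/-- If `(μ,u)` satisfies the Pohožaev identity and `v = u(·/t)` with
`t = (m/‖u‖₂²)^{1/N}`, then `‖v‖₂² = m` and `I^m(μ,u) ≥ K(v)`. -/
theorem stmt_16 (N : ℕ) (s μ m : ℝ) (hs : 0 < s) (hs1 : s < 1)
    (hN : 2 * s < (N : ℝ)) (hm : 0 < m) (G : ℝ → ℝ)
    (u : EuclideanSpace ℝ (Fin N) → ℝ)
    (hu0 : ¬ (∀ᵐ x : EuclideanSpace ℝ (Fin N), u x = 0))
    (hL2 : Integrable (fun x => (u x) ^ 2))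
    (hGag : Integrable (fun p : EuclideanSpace ℝ (Fin N) × EuclideanSpace ℝ (Fin N) =>
        (u p.1 - u p.2) ^ 2 / ‖p.1 - p.2‖ ^ ((N : ℝ) + 2 * s)))
    (hGint : Integrable (fun x => G (u x)))
    (hP : PohMu N s μ G u = 0) :
    l2Sq N (fun x => u (((m / l2Sq N u) ^ ((1 : ℝ) / N))⁻¹ • x)) = m ∧
    enK N s G (fun x => u (((m / l2Sq N u) ^ ((1 : ℝ) / N))⁻¹ • x)) ≤
      lagI N s μ m G u := by
  -- setup
  have hNpos : (0 : ℝ) < N := lt_trans (by linarith) hN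
  have hNne : (N : ℝ) ≠ 0 := ne_of_gt hNpos
  set L : ℝ := l2Sq N u with hLdef
  have hL2nn : 0 ≤ L := by
    rw [hLdef]; unfold l2Sq
    exact integral_nonneg fun x => sq_nonneg _
  have hL : 0 < L := by
    rcases lt_or_eq_of_le hL2nn with h | h
    · exact h
    · exfalso
      apply hu0
      have h0 : ∫ x, (u x) ^ 2 = 0 := h.symm
      have := (integral_eq_zero_iff_of_nonneg (fun x => sq_nonneg (u x)) hL2).mp h0
      filter_upwards [this] with x hx
      exact pow_eq_zero_iff (n := 2) (by norm_num) |>.mp hx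
  set c : ℝ := (m / L) ^ ((1 : ℝ) / N) with hcdef
  have hmL : 0 < m / L := div_pos hm hL
  have hc : 0 < c := Real.rpow_pos_of_pos hmL _
  have hcN : c ^ (N : ℕ) = m / L := by
    rw [hcdef, ← Real.rpow_natCast ((m / L) ^ ((1 : ℝ) / N)) N,
      ← Real.rpow_mul hmL.le, one_div, inv_mul_cancel₀ hNne, Real.rpow_one]
  -- first part
  have hpart1 : l2Sq N (fun x => u (c⁻¹ • x)) = m := by
    unfold l2Sq
    rw [scale_int_aux N hc.le (fun x => (u x) ^ 2)]
    have hIL : ∫ x, (u x) ^ 2 = L := rfl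
    rw [hcN, hIL, div_mul_cancel₀ m hL.ne']
  refine ⟨hpart1, ?_⟩
  -- notation
  set A : ℝ := gagSq N s u with hAdef
  set IG : ℝ := ∫ x, G (u x) with hIGdef
  have hA : 0 ≤ A := by
    rw [hAdef]; unfold gagSq
    exact integral_nonneg fun p =>
      div_nonneg (sq_nonneg _) (Real.rpow_nonneg (norm_nonneg _) _)
  -- scaling of G integral
  have hGscale : ∫ x, G (u (c⁻¹ • x)) = c ^ (N : ℕ) * IG :=
    scale_int_aux N hc.le (fun x => G (u x))
  -- scaling of gagliardo
  have hGag2 : gagSq N s (fun x => u (c⁻¹ • x)) = c ^ ((N : ℝ) - 2 * s) * A := by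
    rw [gag_scale_aux N s hc u, ← hAdef]
    have h2N : (c : ℝ) ^ (2 * N) = c ^ ((2 * N : ℕ) : ℝ) := by
      rw [Real.rpow_natCast]
    rw [h2N, ← Real.rpow_neg hc.le, ← mul_assoc, ← Real.rpow_add hc]
    push_cast
    ring_nf
  -- Pohozaev rewrite
  have hsplit : ∫ x, (μ / 2 * (u x) ^ 2 - G (u x)) = μ / 2 * L - IG := by
    rw [integral_sub (hL2.const_mul _) hGint, integral_const_mul]
    rfl
  have hPoh : A + (2 * N / ((N : ℝ) - 2 * s)) * (μ / 2 * L - IG) = 0 := by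
    have := hP
    unfold PohMu at this
    rw [hsplit] at this
    exact this
  have hNs : (0 : ℝ) < (N : ℝ) - 2 * s := by linarith
  have hB : μ / 2 * L - IG = -(A * ((N : ℝ) - 2 * s)) / (2 * N) := by
    have h2N : (2 * (N : ℝ)) ≠ 0 := by positivity
    field_simp at hPoh ⊢
    nlinarith [hPoh]
  -- AM-GM
  set tN : ℝ := c ^ (N : ℕ) with htNdef
  set tNs : ℝ := c ^ ((N : ℝ) - 2 * s) with htNsdef
  have htNpos : 0 < tN := by rw [htNdef]; positivity
  have hamgm : tNs ≤ 2 * s / N + ((N : ℝ) - 2 * s) / N * tN := by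
    have hw1 : (0 : ℝ) ≤ 2 * s / N := by positivity
    have hw2 : (0 : ℝ) ≤ ((N : ℝ) - 2 * s) / N := by positivity
    have hsum : 2 * s / N + ((N : ℝ) - 2 * s) / N = 1 := by field_simp; ring
    have hpe : (1 : ℝ) ^ (2 * s / N) * tN ^ (((N : ℝ) - 2 * s) / N) = tNs := by
      rw [Real.one_rpow, one_mul, htNdef, htNsdef,
        ← Real.rpow_natCast c N, ← Real.rpow_mul hc.le]
      congr 1
      field_simp
    calc tNs = 1 ^ (2 * s / N) * tN ^ (((N : ℝ) - 2 * s) / N) := hpe.symm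
      _ ≤ 2 * s / N * 1 + ((N : ℝ) - 2 * s) / N * tN :=
          Real.geom_mean_le_arith_mean2_weighted hw1 hw2 zero_le_one htNpos.le hsum
      _ = 2 * s / N + ((N : ℝ) - 2 * s) / N * tN := by ring
  -- final assembly
  have htNm : tN = m / L := hcN
  have hm' : m = tN * L := by rw [htNm]; field_simp
  unfold enK lagI
  rw [hGag2]
  have hGv : (∫ x, G ((fun x => u (c⁻¹ • x)) x)) = tN * IG := hGscale
  rw [hGv, ← hAdef, ← hIGdef, ← hLdef]
  -- goal: 1/2 * (tNs * A) - tN * IG ≤ 1/2 * A + μ/2 * (L - m) - IG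
  have h2 : (N : ℝ) * tNs ≤ 2 * s + ((N : ℝ) - 2 * s) * tN := by
    have hh := mul_le_mul_of_nonneg_left hamgm hNpos.le
    have heq : (N : ℝ) * (2 * s / N + ((N : ℝ) - 2 * s) / N * tN)
        = 2 * s + ((N : ℝ) - 2 * s) * tN := by
      field_simp
    linarith [heq ▸ hh]
  have hbracket : 0 ≤ A * (2 * s + ((N : ℝ) - 2 * s) * tN - (N : ℝ) * tNs) :=
    mul_nonneg hA (by linarith)
  have hB2 : 2 * (N : ℝ) * (μ / 2 * L - IG) = -(A * ((N : ℝ) - 2 * s)) := by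
    rw [hB]
    field_simp
  have hB3 : (1 - tN) * (2 * (N : ℝ) * (μ / 2 * L - IG))
      = (1 - tN) * (-(A * ((N : ℝ) - 2 * s))) := by rw [hB2]
  rw [hm']
  nlinarith [hbracket, hB3, hNpos]
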